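/- If D is a diagnosis for the original DPI but not for the extended DPI (i.e., D is invalidated by new measurements), then there is a minimal conflict C' for the extended DPI with D ∩ C' = ∅ (assuming O finite). -/
import Mathlib


open Set

variable {α : Type*}

/-- `C` is a conflict for the DPI `(O, B, P, N)` wrt entailment `Ent` and falsum `bot`. -/
def IsConflict (Ent : Set α → α → Prop) (bot : α) (O B P N C : Set α) : Prop :=
  C ⊆ O ∧ ∃ x ∈ N ∪ {bot}, Ent (C ∪ B ∪ P) x

/-- `C` is a minimal conflict. -/
def IsMinConflict (Ent : Set α → α → Prop) (bot : α) (O B P N C : Set α) : Prop :=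
  IsConflict Ent bot O B P N C ∧ ∀ C' ⊂ C, ¬ IsConflict Ent bot O B P N C'

/-- `D` is a diagnosis for the DPI `(O, B, P, N)`. -/
def IsDiagnosis (Ent : Set α → α → Prop) (bot : α) (O B P N D : Set α) : Prop :=
  D ⊆ O ∧ ∀ x ∈ N ∪ {bot}, ¬ Ent ((O \ D) ∪ B ∪ P) x

/-- `D` is a minimal diagnosis. -/
def IsMinDiagnosis (Ent : Set α → α → Prop) (bot : α) (O B P N D : Set α) : Prop :=
  IsDiagnosis Ent bot O B P N D ∧ ∀ D' ⊂ D, ¬ IsDiagnosis Ent bot O B P N D'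

lemma exists_min_conflict_subset (Ent : Set α → α → Prop) (bot : α) (O B P N : Set α) :
    ∀ n (C : Set α), C.Finite → C.ncard ≤ n → IsConflict Ent bot O B P N C →
      ∃ C' ⊆ C, IsMinConflict Ent bot O B P N C' := by
  intro n
  induction n with
  | zero =>
    intro C hfin hcard hC
    refine ⟨C, subset_rfl, hC, fun C' hss hC' => ?_⟩
    have hlt : C'.ncard < C.ncard := Set.ncard_lt_ncard hss hfin
    omega
  | succ n ih =>
    intro C hfin hcard hC
    by_cases h : ∀ C' ⊂ C, ¬ IsConflict Ent bot O B P N C'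
    · exact ⟨C, subset_rfl, hC, h⟩
    · push_neg at h
      obtain ⟨C', hss, hC'⟩ := h
      have hlt : C'.ncard < C.ncard := Set.ncard_lt_ncard hss hfin
      obtain ⟨C'', h1, h2⟩ := ih C' (hfin.subset hss.subset) (by omega) hC'
      exact ⟨C'', h1.trans hss.subset, h2⟩

theorem invalidated_diagnosis_misses_new_min_conflict (Ent : Set α → α → Prop)
    (hmono : ∀ (S T : Set α) (x : α), S ⊆ T → Ent S x → Ent T x)
    (bot : α) (O B P N P' N' D : Set α) (hfin : O.Finite)
    (hD : IsDiagnosis Ent bot O B P N D)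
    (hnot : ¬ IsDiagnosis Ent bot O B (P ∪ P') (N ∪ N') D) :
    ∃ C', IsMinConflict Ent bot O B (P ∪ P') (N ∪ N') C' ∧ D ∩ C' = ∅ := by
  obtain ⟨hDO, -⟩ := hD
  unfold IsDiagnosis at hnot
  push_neg at hnot
  obtain ⟨x, hx, hEx⟩ := hnot hDO
  have hC0 : IsConflict Ent bot O B (P ∪ P') (N ∪ N') (O \ D) :=
    ⟨diff_subset, x, hx, hEx⟩
  obtain ⟨C', hsub, hmin⟩ := exists_min_conflict_subset Ent bot O B (P ∪ P') (N ∪ N')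
    (O \ D).ncard (O \ D) (hfin.subset diff_subset) le_rfl hC0
  refine ⟨C', hmin, ?_⟩
  ext y
  simp only [mem_inter_iff, mem_empty_iff_false, iff_false, not_and]
  intro hyD hyC
  exact (hsub hyC).2 hyD
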